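/- arXiv:1906.07596 — 2 statements merged into one kernel-verified Lean document; each statement's English description precedes it below -/
import Mathlib

section
/- Let (G, m, b) be an infinite weighted directed graph with constant vertex weight m, satisfying the Kirchhoff assumption, locally finite and weakly connected. If g ∈ ℓ²(V,m) satisfies Δ'g + g = 0 pointwise, then g = 0. Consequently the closure of Δ is m-accretive. -/
open scoped ComplexConjugate
noncomputable section

variable {V : Type*}

/-- The (non-symmetric) weighted graph Laplacian `Δf(x) = (1/m(x)) Σ_y b(x,y)(f(x)-f(y))`. -/
def lapOp (m : V → ℝ) (b : V → V → ℝ) (f : V → ℂ) (x : V) : ℂ :=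
  (1 / (m x : ℂ)) * ∑' y, (b x y : ℂ) * (f x - f y)

/-- The skew-symmetric part `B = (Δ - Δ')/2`. -/
def skewOp (m : V → ℝ) (b : V → V → ℝ) (f : V → ℂ) (x : V) : ℂ :=
  (1 / (m x : ℂ)) * ∑' y, (((b x y - b y x) / 2 : ℝ) : ℂ) * (f x - f y)

/-- The symmetrized weight `b'(x,y) = (b(x,y)+b(y,x))/2`. -/
def bsym (b : V → V → ℝ) (x y : V) : ℝ := (b x y + b y x) / 2

/-- The `ℓ²(V,m)` inner product `⟨f,g⟩ = Σ_x m(x) f(x) conj(g(x))`. -/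
def gip (m : V → ℝ) (f g : V → ℂ) : ℂ := ∑' x, (m x : ℂ) * f x * conj (g x)

/-- The squared `ℓ²(V,m)` norm. -/
def l2normSq (m : V → ℝ) (f : V → ℂ) : ℝ := ∑' x, m x * ‖f x‖ ^ 2

/-- Finitely supported functions (the domain `C_c(V)`). -/
def FinSupp (f : V → ℂ) : Prop := (Function.support f).Finite

/-- Local finiteness of the graph. -/
def LocFinGraph (b : V → V → ℝ) : Prop := ∀ x : V, {y | b x y ≠ 0 ∨ b y x ≠ 0}.Finite

/-- Kirchhoff's assumption (β): at each vertex the incoming and outgoing conductances agree. -/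
def Kirchhoff (b : V → V → ℝ) : Prop := ∀ x : V, ∑' y, b x y = ∑' y, b y x

/-- Weak connectedness of the graph. -/
def WeaklyConnected (b : V → V → ℝ) : Prop :=
  ∀ x y : V, Relation.ReflTransGen (fun u v => b u v ≠ 0 ∨ b v u ≠ 0) x y

/-- Membership in `ℓ²(V,m)`. -/
def MemL2 (m : V → ℝ) (f : V → ℂ) : Prop := Summable fun x => m x * ‖f x‖ ^ 2

/-- m-accretiveness of the closure of the operator `T` defined on `C_c(V) ⊆ ℓ²(V,m)`:
for every `λ` with `Re λ > 0`, the a-priori bound `Re(λ)‖f‖ ≤ ‖(T+λ)f‖` holds on `C_c(V)`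
and the range of `T + λ` on `C_c(V)` is dense in `ℓ²(V,m)`.  (For an accretive operator this
is equivalent to: the left open half-plane lies in the resolvent set of the closure of `T`
and `‖(closure T + λ)⁻¹‖ ≤ 1/Re(λ)`.) -/
def IsMAccretiveClosure (m : V → ℝ) (T : (V → ℂ) → V → ℂ) : Prop :=
  ∀ l : ℂ, 0 < l.re →
    (∀ f : V → ℂ, FinSupp f →
      l.re ^ 2 * l2normSq m f ≤ l2normSq m (fun x => T f x + l * f x)) ∧
    ∀ v : V → ℂ, MemL2 m v → ∀ ε : ℝ, 0 < ε →
      ∃ f : V → ℂ, FinSupp f ∧ l2normSq m (fun x => T f x + l * f x - v x) < ε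

/-- Essential self-adjointness of a symmetric operator `T` defined on `C_c(V) ⊆ ℓ²(V,m)`,
phrased as density of the ranges of `T + i` and `T - i`. -/
def EssSelfAdjointOn (m : V → ℝ) (T : (V → ℂ) → V → ℂ) : Prop :=
  ∀ l : ℂ, l = Complex.I ∨ l = -Complex.I →
    ∀ v : V → ℂ, MemL2 m v → ∀ ε : ℝ, 0 < ε →
      ∃ f : V → ℂ, FinSupp f ∧ l2normSq m (fun x => T f x + l * f x - v x) < ε

/-- χ-completeness of the weighted graph `(V,m,c)` (with symmetric weight `c`). -/
def ChiComplete (m : V → ℝ) (c : V → V → ℝ) : Prop :=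
  ∃ (Bn : ℕ → Set V) (χ : ℕ → V → ℝ) (C : ℝ), 0 < C ∧
    Monotone Bn ∧ (∀ n, (Bn n).Finite) ∧ (⋃ n, Bn n) = Set.univ ∧
    (∀ n, (Function.support (χ n)).Finite) ∧
    (∀ n x, 0 ≤ χ n x ∧ χ n x ≤ 1) ∧
    (∀ n x, x ∈ Bn n → χ n x = 1) ∧
    (∀ n x, (1 / m x) * ∑' y, c x y * |χ n x - χ n y| ^ 2 ≤ C)

/-- The asymmetry condition (hypothesis \eqref{thm-chi}):
`(1/m(x)) Σ_y |b(x,y) - b(y,x)|²/b'(x,y) ≤ C` for all `x`. -/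
def AsymCond (m : V → ℝ) (b : V → V → ℝ) (C : ℝ) : Prop :=
  ∀ x : V, (1 / m x) * ∑' y, |b x y - b y x| ^ 2 / bsym b x y ≤ C

section Helpers
variable {b : V → V → ℝ} (hlf : LocFinGraph b)

lemma bzero1 {x y : V} (h : y ∉ (hlf x).toFinset) : b x y = 0 := by
  rw [Set.Finite.mem_toFinset] at h
  simp only [Set.mem_setOf_eq, not_or, not_not] at h
  exact h.1

lemma bzero2 {x y : V} (h : y ∉ (hlf x).toFinset) : b y x = 0 := by
  rw [Set.Finite.mem_toFinset] at h
  simp only [Set.mem_setOf_eq, not_or, not_not] at h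
  exact h.2

lemma tsumb (x : V) (w : V → ℂ) :
    ∑' y, (b x y : ℂ) * w y = ∑ y ∈ (hlf x).toFinset, (b x y : ℂ) * w y := by
  refine tsum_eq_sum fun y hy => ?_
  rw [bzero1 hlf hy]
  simp


lemma tsumbt (x : V) (w : V → ℂ) :
    ∑' y, (b y x : ℂ) * w y = ∑ y ∈ (hlf x).toFinset, (b y x : ℂ) * w y := by
  refine tsum_eq_sum fun y hy => ?_
  rw [bzero2 hlf hy]
  simp

lemma tsumbr (x : V) : ∑' y, b x y = ∑ y ∈ (hlf x).toFinset, b x y :=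
  tsum_eq_sum fun _ hy => bzero1 hlf hy

lemma tsumbtr (x : V) : ∑' y, b y x = ∑ y ∈ (hlf x).toFinset, b y x :=
  tsum_eq_sum fun _ hy => bzero2 hlf hy

/-- The enlarged support. -/
def Tfin (f : V → ℂ) (hf : FinSupp f) : Finset V :=
  letI := Classical.decEq V
  hf.toFinset ∪ hf.toFinset.biUnion fun z => (hlf z).toFinset

lemma mem_Tfin {f : V → ℂ} {hf : FinSupp f} {x : V} :
    x ∈ Tfin hlf f hf ↔ x ∈ hf.toFinset ∨ ∃ z ∈ hf.toFinset, x ∈ (hlf z).toFinset := by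
  simp [Tfin, Finset.mem_union, Finset.mem_biUnion]

lemma supp_sub_Tfin {f : V → ℂ} (hf : FinSupp f) : hf.toFinset ⊆ Tfin hlf f hf :=
  fun _ hx => (mem_Tfin hlf).mpr (Or.inl hx)

lemma nb_sub_Tfin {f : V → ℂ} (hf : FinSupp f) {x : V} (hx : x ∈ hf.toFinset) :
    (hlf x).toFinset ⊆ Tfin hlf f hf :=
  fun _ hy => (mem_Tfin hlf).mpr (Or.inr ⟨x, hx, hy⟩)

lemma f_zero_of_not_Tfin {f : V → ℂ} (hf : FinSupp f) {x : V}
    (hx : x ∉ Tfin hlf f hf) : f x = 0 := by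
  by_contra h
  exact hx (supp_sub_Tfin hlf hf ((Set.Finite.mem_toFinset hf).mpr h))

lemma lap_zero_of_not_Tfin (c : ℝ) {f : V → ℂ} (hf : FinSupp f) {x : V}
    (hx : x ∉ Tfin hlf f hf) : lapOp (fun _ => c) b f x = 0 := by
  have hfx := f_zero_of_not_Tfin hlf hf hx
  rw [lapOp]
  have : ∀ y, (b x y : ℂ) * (f x - f y) = 0 := by
    intro y
    by_cases hfy : f y = 0
    · rw [hfx, hfy]
      simp
    · have hy : y ∈ hf.toFinset := (Set.Finite.mem_toFinset hf).mpr hfy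
      have hbxy : b x y = 0 := by
        by_contra hbne
        exact hx (nb_sub_Tfin hlf hf hy (by
          rw [Set.Finite.mem_toFinset]
          exact Or.inr hbne))
      rw [hbxy]
      simp
  simp [this]

end Helpers

lemma maxPrinciple (c : ℝ) (hc : 0 < c) (b : V → V → ℝ)
    (hb : ∀ x y, 0 ≤ b x y) (hlf : LocFinGraph b) (l : ℂ) (hl : 0 < l.re)
    (g : V → ℂ) (hg2 : MemL2 (fun _ => c) g)
    (heq : ∀ x, lapOp (fun _ => c) (fun x y => b y x) g x + l * g x = 0) : g = 0 := by
  by_contra hne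
  rw [funext_iff] at hne
  push_neg at hne
  obtain ⟨x₁, hx₁⟩ := hne
  rw [Pi.zero_apply] at hx₁
  have hsum : Summable fun x => ‖g x‖ ^ 2 := by
    have h := (hg2 : Summable fun x => c * ‖g x‖ ^ 2).mul_left c⁻¹
    simpa [inv_mul_cancel_left₀ hc.ne'] using h
  set t := ‖g x₁‖ ^ 2 with ht
  have htpos : 0 < t := by
    have : 0 < ‖g x₁‖ := norm_pos_iff.mpr hx₁
    positivity
  have hcof : {x | ¬ ‖g x‖ ^ 2 < t}.Finite := by
    have h2 : ∀ᶠ x in Filter.cofinite, ‖g x‖ ^ 2 < t :=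
      hsum.tendsto_cofinite_zero.eventually_lt_const htpos
    exact Filter.eventually_cofinite.mp h2
  have hx₁F : x₁ ∈ hcof.toFinset := by
    rw [Set.Finite.mem_toFinset]
    simp only [Set.mem_setOf_eq, ← ht]
    exact lt_irrefl t
  obtain ⟨x₀, hx₀F, hx₀max⟩ :=
    hcof.toFinset.exists_max_image (fun x => ‖g x‖) ⟨x₁, hx₁F⟩
  have hx₀t : t ≤ ‖g x₀‖ ^ 2 := by
    have := hx₀F
    rw [Set.Finite.mem_toFinset] at this
    exact not_lt.mp this
  have hM : ∀ y, ‖g y‖ ≤ ‖g x₀‖ := by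
    intro y
    by_cases hy : y ∈ hcof.toFinset
    · exact hx₀max y hy
    · rw [Set.Finite.mem_toFinset] at hy
      have h1 : ‖g y‖ ^ 2 < t := not_not.mp hy
      nlinarith [norm_nonneg (g y), norm_nonneg (g x₀)]
  have hMpos : 0 < ‖g x₀‖ := lt_of_lt_of_le (norm_pos_iff.mpr hx₁) (hM x₁)
  -- the equation at x₀
  have E := heq x₀
  rw [lapOp] at E
  rw [show (∑' y, (((fun x y => b y x) x₀ y : ℝ) : ℂ) * (g x₀ - g y))
      = ∑ y ∈ (hlf x₀).toFinset, ((b y x₀ : ℝ) : ℂ) * (g x₀ - g y) from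
    tsumbt hlf x₀ (fun y => g x₀ - g y)] at E
  set s := (hlf x₀).toFinset
  set S := ∑ y ∈ s, ((b y x₀ : ℝ) : ℂ) * (g x₀ - g y) with hS
  have E3 : (((1 / (c : ℂ)) * S + l * g x₀) * conj (g x₀)).re = 0 := by
    rw [E]
    simp
  have hre1 : 0 ≤ ((1 / (c : ℂ)) * S * conj (g x₀)).re := by
    have : (1 / (c : ℂ)) * S * conj (g x₀) = ((1 / c : ℝ) : ℂ) * (S * conj (g x₀)) := by
      push_cast
      ring
    rw [this, Complex.re_ofReal_mul]
    have hnn : 0 ≤ (S * conj (g x₀)).re := by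
      rw [hS, Finset.sum_mul, Complex.re_sum]
      refine Finset.sum_nonneg fun y _ => ?_
      have : ((b y x₀ : ℝ) : ℂ) * (g x₀ - g y) * conj (g x₀)
          = ((b y x₀ : ℝ) : ℂ) * ((g x₀ - g y) * conj (g x₀)) := by ring
      rw [this, Complex.re_ofReal_mul]
      refine mul_nonneg (hb y x₀) ?_
      rw [sub_mul, Complex.sub_re, Complex.mul_conj, Complex.ofReal_re]
      have h1 : (g y * conj (g x₀)).re ≤ ‖g y‖ * ‖g x₀‖ := by
        calc (g y * conj (g x₀)).re ≤ ‖g y * conj (g x₀)‖ := Complex.re_le_norm _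
          _ = ‖g y‖ * ‖g x₀‖ := by
            rw [norm_mul, Complex.norm_conj]
      have h2 : ‖g y‖ * ‖g x₀‖ ≤ ‖g x₀‖ * ‖g x₀‖ :=
        mul_le_mul_of_nonneg_right (hM y) (norm_nonneg _)
      have h3 : Complex.normSq (g x₀) = ‖g x₀‖ * ‖g x₀‖ := by
        rw [Complex.normSq_eq_norm_sq]
        simp [sq]
      linarith
    positivity
  have hre2 : (l * (g x₀ * conj (g x₀))).re = l.re * (‖g x₀‖ * ‖g x₀‖) := by
    rw [Complex.mul_conj]
    have h3 : Complex.normSq (g x₀) = ‖g x₀‖ * ‖g x₀‖ := by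
      rw [Complex.normSq_eq_norm_sq]
      simp [sq]
    simp [Complex.mul_re, h3]
  have hexp : (((1 / (c : ℂ)) * S + l * g x₀) * conj (g x₀)).re
      = ((1 / (c : ℂ)) * S * conj (g x₀)).re + (l * (g x₀ * conj (g x₀))).re := by
    rw [show ((1 / (c : ℂ)) * S + l * g x₀) * conj (g x₀)
        = (1 / (c : ℂ)) * S * conj (g x₀) + l * (g x₀ * conj (g x₀)) by ring]
    exact Complex.add_re _ _
  rw [hexp, hre2] at E3
  nlinarith


lemma nsq (z : ℂ) : ‖z‖ ^ 2 = Complex.normSq z := by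
  rw [← Complex.sq_norm]

lemma term_re (r : ℝ) (z w : ℂ) :
    2 * (((r : ℂ) * ((z - w) * conj z)).re)
      = r * (2 * Complex.normSq z - 2 * (w * conj z).re) := by
  rw [Complex.re_ofReal_mul, sub_mul, Complex.sub_re, Complex.mul_conj, Complex.ofReal_re]
  ring

lemma normSq_sub (z w : ℂ) :
    Complex.normSq (z - w)
      = Complex.normSq z + Complex.normSq w - 2 * (w * conj z).re := by
  simp only [Complex.normSq_apply, Complex.sub_re, Complex.sub_im, Complex.mul_re,
    Complex.conj_re, Complex.conj_im]
  ring

lemma apriori (c : ℝ) (hc : 0 < c) (b : V → V → ℝ)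
    (hb : ∀ x y, 0 ≤ b x y) (hlf : LocFinGraph b) (hK : Kirchhoff b)
    (l : ℂ) (hl : 0 < l.re) (f : V → ℂ) (hf : FinSupp f) :
    l.re ^ 2 * l2normSq (fun _ => c) f
      ≤ l2normSq (fun _ => c) (fun x => lapOp (fun _ => c) b f x + l * f x) := by
  classical
  set T := Tfin hlf f hf with hT
  set u : V → ℂ := fun x => lapOp (fun _ => c) b f x + l * f x with hu
  have husupp : ∀ x, x ∉ T → u x = 0 := by
    intro x hx
    rw [hu]
    simp only
    rw [lap_zero_of_not_Tfin hlf c hf hx, f_zero_of_not_Tfin hlf hf hx]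
    ring
  set B := ∑ x ∈ T, c * ‖f x‖ ^ 2 with hBdef
  set A := ∑ x ∈ T, c * ‖u x‖ ^ 2 with hAdef
  have hBeq : l2normSq (fun _ => c) f = B := by
    refine tsum_eq_sum fun x hx => ?_
    rw [f_zero_of_not_Tfin hlf hf hx]
    simp
  have hAeq : l2normSq (fun _ => c) u = A := by
    refine tsum_eq_sum fun x hx => ?_
    rw [husupp x hx]
    simp
  have hBnn : 0 ≤ B := Finset.sum_nonneg fun x _ => by positivity
  have hAnn : 0 ≤ A := Finset.sum_nonneg fun x _ => by positivity
  -- the quadratic form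
  set Q := ∑ x ∈ T, ∑ y ∈ T, (b x y : ℂ) * ((f x - f y) * conj (f x)) with hQdef
  -- rewrite `c·Δf·conj f` as a double sum
  have hlap : ∀ x ∈ T, (c : ℂ) * lapOp (fun _ => c) b f x * conj (f x)
      = ∑ y ∈ T, (b x y : ℂ) * ((f x - f y) * conj (f x)) := by
    intro x hxT
    by_cases hfx : f x = 0
    · rw [hfx]
      simp
    · have hxS : x ∈ hf.toFinset := (Set.Finite.mem_toFinset hf).mpr hfx
      rw [lapOp]
      rw [tsumb hlf x (fun y => f x - f y)]
      have hext : ∑ y ∈ (hlf x).toFinset, (b x y : ℂ) * (f x - f y)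
          = ∑ y ∈ T, (b x y : ℂ) * (f x - f y) := by
        refine Finset.sum_subset (nb_sub_Tfin hlf hf hxS) fun y _ hy => ?_
        rw [bzero1 hlf hy]
        simp
      rw [hext, show (c : ℂ) * ((1 / ((fun _ : V => c) x : ℂ)) * ∑ y ∈ T, (b x y : ℂ) * (f x - f y)) * conj (f x)
          = ((c : ℂ) * (1 / (c : ℂ))) * ((∑ y ∈ T, (b x y : ℂ) * (f x - f y)) * conj (f x)) from by ring]
      rw [mul_one_div_cancel (by exact_mod_cast hc.ne' : (c : ℂ) ≠ 0), one_mul, Finset.sum_mul]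
      exact Finset.sum_congr rfl fun y _ => by ring
  -- Kirchhoff symmetrization
  have hKT : ∑ x ∈ T, ∑ y ∈ T, b x y * Complex.normSq (f x)
      = ∑ x ∈ T, ∑ y ∈ T, b x y * Complex.normSq (f y) := by
    have hstep : ∀ x ∈ T, ∑ y ∈ T, b x y * Complex.normSq (f x)
        = ∑ y ∈ T, b y x * Complex.normSq (f x) := by
      intro x _
      by_cases hfx : f x = 0
      · simp [hfx]
      · have hxS : x ∈ hf.toFinset := (Set.Finite.mem_toFinset hf).mpr hfx
        rw [← Finset.sum_mul, ← Finset.sum_mul]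
        congr 1
        have h1 : ∑ y ∈ T, b x y = ∑ y ∈ (hlf x).toFinset, b x y :=
          (Finset.sum_subset (nb_sub_Tfin hlf hf hxS) fun y _ hy => bzero1 hlf hy).symm
        have h2 : ∑ y ∈ T, b y x = ∑ y ∈ (hlf x).toFinset, b y x :=
          (Finset.sum_subset (nb_sub_Tfin hlf hf hxS) fun y _ hy => bzero2 hlf hy).symm
        rw [h1, h2, ← tsumbr hlf x, ← tsumbtr hlf x]
        exact hK x
    calc ∑ x ∈ T, ∑ y ∈ T, b x y * Complex.normSq (f x)
        = ∑ x ∈ T, ∑ y ∈ T, b y x * Complex.normSq (f x) :=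
          Finset.sum_congr rfl hstep
      _ = ∑ y ∈ T, ∑ x ∈ T, b y x * Complex.normSq (f x) := Finset.sum_comm
      _ = ∑ x ∈ T, ∑ y ∈ T, b x y * Complex.normSq (f y) := rfl
  -- Green: Q.re ≥ 0
  have hQre : 0 ≤ Q.re := by
    have h2Q : 2 * Q.re
        = ∑ x ∈ T, ∑ y ∈ T, b x y * (2 * Complex.normSq (f x) - 2 * (f y * conj (f x)).re) := by
      rw [hQdef, Complex.re_sum, Finset.mul_sum]
      refine Finset.sum_congr rfl fun x _ => ?_
      rw [Complex.re_sum, Finset.mul_sum]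
      exact Finset.sum_congr rfl fun y _ => term_re (b x y) (f x) (f y)
    have h2Q' : 2 * Q.re = ∑ x ∈ T, ∑ y ∈ T, b x y * Complex.normSq (f x - f y) := by
      rw [h2Q]
      have expand : ∀ x y : V, b x y * (2 * Complex.normSq (f x) - 2 * (f y * conj (f x)).re)
          = (b x y * Complex.normSq (f x - f y))
            + (b x y * Complex.normSq (f x) - b x y * Complex.normSq (f y)) := by
        intro x y
        rw [normSq_sub (f x) (f y)]
        ring
      calc ∑ x ∈ T, ∑ y ∈ T, b x y * (2 * Complex.normSq (f x) - 2 * (f y * conj (f x)).re)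
          = (∑ x ∈ T, ∑ y ∈ T, b x y * Complex.normSq (f x - f y))
            + ((∑ x ∈ T, ∑ y ∈ T, b x y * Complex.normSq (f x))
              - ∑ x ∈ T, ∑ y ∈ T, b x y * Complex.normSq (f y)) := by
            rw [← Finset.sum_sub_distrib, ← Finset.sum_add_distrib]
            refine Finset.sum_congr rfl fun x _ => ?_
            rw [← Finset.sum_sub_distrib, ← Finset.sum_add_distrib]
            exact Finset.sum_congr rfl fun y _ => expand x y
        _ = ∑ x ∈ T, ∑ y ∈ T, b x y * Complex.normSq (f x - f y) := by
            rw [hKT]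
            ring
    have hnn : 0 ≤ ∑ x ∈ T, ∑ y ∈ T, b x y * Complex.normSq (f x - f y) :=
      Finset.sum_nonneg fun x _ => Finset.sum_nonneg fun y _ =>
        mul_nonneg (hb x y) (Complex.normSq_nonneg _)
    linarith [h2Q' ▸ hnn]
  -- P := pairing of u against f
  set P := ∑ x ∈ T, (c : ℂ) * (u x * conj (f x)) with hPdef
  have hPre : P.re = Q.re + l.re * B := by
    rw [hPdef, Complex.re_sum, hQdef, Complex.re_sum, hBdef, Finset.mul_sum,
      ← Finset.sum_add_distrib]
    refine Finset.sum_congr rfl fun x hxT => ?_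
    have hsplit : (c : ℂ) * (u x * conj (f x))
        = (c : ℂ) * lapOp (fun _ => c) b f x * conj (f x) + (c : ℂ) * (l * (f x * conj (f x))) := by
      rw [hu]
      ring
    rw [hsplit, Complex.add_re, hlap x hxT, Complex.re_sum, ← Complex.re_sum]
    congr 1
    rw [Complex.re_ofReal_mul, Complex.mul_conj]
    have : (l * (Complex.normSq (f x) : ℂ)).re = l.re * Complex.normSq (f x) := by
      simp [Complex.mul_re]
    rw [this, nsq]
    ring
  -- Cauchy–Schwarz
  have hCS : P.re ^ 2 ≤ A * B := by
    have hD : P.re ≤ ∑ x ∈ T, (Real.sqrt c * ‖u x‖) * (Real.sqrt c * ‖f x‖) := by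
      rw [hPdef, Complex.re_sum]
      refine Finset.sum_le_sum fun x _ => ?_
      calc ((c : ℂ) * (u x * conj (f x))).re
          ≤ ‖(c : ℂ) * (u x * conj (f x))‖ := Complex.re_le_norm _
        _ = c * (‖u x‖ * ‖f x‖) := by
            rw [norm_mul, norm_mul, Complex.norm_conj, Complex.norm_real, Real.norm_eq_abs,
              abs_of_pos hc]
        _ = (Real.sqrt c * ‖u x‖) * (Real.sqrt c * ‖f x‖) := by
            rw [show (Real.sqrt c * ‖u x‖) * (Real.sqrt c * ‖f x‖)
              = (Real.sqrt c * Real.sqrt c) * (‖u x‖ * ‖f x‖) from by ring,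
              Real.mul_self_sqrt hc.le]
    have hD2 : (∑ x ∈ T, (Real.sqrt c * ‖u x‖) * (Real.sqrt c * ‖f x‖)) ^ 2
        ≤ (∑ x ∈ T, (Real.sqrt c * ‖u x‖) ^ 2) * ∑ x ∈ T, (Real.sqrt c * ‖f x‖) ^ 2 :=
      Finset.sum_mul_sq_le_sq_mul_sq T _ _
    have hAid : ∑ x ∈ T, (Real.sqrt c * ‖u x‖) ^ 2 = A := by
      rw [hAdef]
      refine Finset.sum_congr rfl fun x _ => ?_
      rw [mul_pow, Real.sq_sqrt hc.le]
    have hBid : ∑ x ∈ T, (Real.sqrt c * ‖f x‖) ^ 2 = B := by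
      rw [hBdef]
      refine Finset.sum_congr rfl fun x _ => ?_
      rw [mul_pow, Real.sq_sqrt hc.le]
    have hPnn : 0 ≤ P.re := by
      rw [hPre]
      have : 0 ≤ l.re * B := mul_nonneg hl.le hBnn
      linarith
    have hDnn : 0 ≤ ∑ x ∈ T, (Real.sqrt c * ‖u x‖) * (Real.sqrt c * ‖f x‖) :=
      Finset.sum_nonneg fun x _ => by positivity
    calc P.re ^ 2 ≤ (∑ x ∈ T, (Real.sqrt c * ‖u x‖) * (Real.sqrt c * ‖f x‖)) ^ 2 := by
          exact pow_le_pow_left₀ hPnn hD 2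
      _ ≤ A * B := by rw [← hAid, ← hBid]; exact hD2
  -- conclude
  rw [hBeq, hAeq]
  have hkey : l.re * B ≤ P.re := by
    rw [hPre]
    linarith
  by_cases hB0 : B = 0
  · rw [hB0]
    simpa using hAnn
  · have hBpos : 0 < B := lt_of_le_of_ne hBnn (Ne.symm hB0)
    nlinarith [hCS, hkey, mul_le_mul_of_nonneg_right hkey (mul_nonneg hl.le hBnn)]

/-! ### Density machinery -/

lemma rpow_two_toReal (r : ℝ) : r ^ (2 : ENNReal).toReal = r ^ 2 := by
  rw [show (2 : ENNReal).toReal = ((2 : ℕ) : ℝ) by norm_num, Real.rpow_natCast]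

lemma memℓp_of_finsupp {h : V → ℂ} (hh : FinSupp h) : Memℓp h 2 := by
  apply memℓp_gen
  refine summable_of_ne_finset_zero (s := hh.toFinset) fun x hx => ?_
  have hzero : h x = 0 := by
    by_contra hne
    exact hx ((Set.Finite.mem_toFinset hh).mpr hne)
  rw [hzero, rpow_two_toReal]
  simp

lemma memℓp_of_memL2 {c : ℝ} (hc : 0 < c) {v : V → ℂ} (hv : MemL2 (fun _ => c) v) :
    Memℓp v 2 := by
  apply memℓp_gen
  have h := (hv : Summable fun x => c * ‖v x‖ ^ 2).mul_left c⁻¹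
  have h2 : Summable fun x => ‖v x‖ ^ 2 := by
    simpa [inv_mul_cancel_left₀ hc.ne'] using h
  exact h2.congr fun x => (rpow_two_toReal _).symm

lemma memL2_of_lp {c : ℝ} (g : lp (fun _ : V => ℂ) 2) : MemL2 (fun _ => c) (g : V → ℂ) := by
  have h := (lp.memℓp g).summable (by norm_num : 0 < (2 : ENNReal).toReal)
  have h2 : Summable fun x => ‖(g : V → ℂ) x‖ ^ 2 := h.congr fun x => rpow_two_toReal _
  exact h2.mul_left c

lemma lp_norm_sq (w : lp (fun _ : V => ℂ) 2) : ‖w‖ ^ 2 = ∑' x, ‖(w : V → ℂ) x‖ ^ 2 := by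
  have h := lp.norm_rpow_eq_tsum (p := 2) (by norm_num) w
  rw [rpow_two_toReal] at h
  rw [h]
  exact tsum_congr fun x => rpow_two_toReal _

section Lin

variable {c : ℝ} {b : V → V → ℝ}

lemma lapOp_add (hlf : LocFinGraph b) (f g : V → ℂ) (x : V) :
    lapOp (fun _ => c) b (fun y => f y + g y) x
      = lapOp (fun _ => c) b f x + lapOp (fun _ => c) b g x := by
  simp only [lapOp]
  rw [tsumb hlf x (fun y => (f x + g x) - (f y + g y)), tsumb hlf x (fun y => f x - f y),
    tsumb hlf x (fun y => g x - g y), ← mul_add, ← Finset.sum_add_distrib]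
  congr 1
  exact Finset.sum_congr rfl fun y _ => by ring

lemma lapOp_smul (hlf : LocFinGraph b) (a : ℂ) (f : V → ℂ) (x : V) :
    lapOp (fun _ => c) b (fun y => a * f y) x = a * lapOp (fun _ => c) b f x := by
  simp only [lapOp]
  rw [tsumb hlf x (fun y => a * f x - a * f y), tsumb hlf x (fun y => f x - f y)]
  have hsum : ∑ y ∈ (hlf x).toFinset, (b x y : ℂ) * (a * f x - a * f y)
      = a * ∑ y ∈ (hlf x).toFinset, (b x y : ℂ) * (f x - f y) := by
    rw [Finset.mul_sum]
    exact Finset.sum_congr rfl fun y _ => by ring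
  rw [hsum]
  ring

lemma lapOp_zero (hlf : LocFinGraph b) (x : V) :
    lapOp (fun _ => c) b (fun _ => (0 : ℂ)) x = 0 := by
  simp [lapOp]

lemma finsupp_image (hlf : LocFinGraph b) (l : ℂ) {f : V → ℂ} (hf : FinSupp f) :
    FinSupp (fun x => lapOp (fun _ => c) b f x + l * f x) := by
  refine Set.Finite.subset (Tfin hlf f hf).finite_toSet fun x hx => ?_
  rw [Function.mem_support] at hx
  by_contra hxT
  rw [Finset.mem_coe] at hxT
  apply hx
  rw [lap_zero_of_not_Tfin hlf c hf hxT, f_zero_of_not_Tfin hlf hf hxT]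
  ring

end Lin

/-- The range of `Δ + l` on `C_c` as a submodule of `ℓ²`. -/
def rangeSubmodule (c : ℝ) (b : V → V → ℝ) (hlf : LocFinGraph b) (l : ℂ) :
    Submodule ℂ (lp (fun _ : V => ℂ) 2) where
  carrier := {u | ∃ f : V → ℂ, FinSupp f ∧
    ∀ x, (u : V → ℂ) x = lapOp (fun _ => c) b f x + l * f x}
  zero_mem' := by
    refine ⟨fun _ => 0, by simp [FinSupp], fun x => ?_⟩
    rw [lp.coeFn_zero, Pi.zero_apply, lapOp_zero hlf]
    ring
  add_mem' := by
    rintro u v ⟨f, hf, hfu⟩ ⟨g, hg, hgv⟩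
    refine ⟨fun y => f y + g y, ?_, fun x => ?_⟩
    · exact Set.Finite.subset (hf.union hg) (Function.support_add f g)
    · have : (↑(u + v) : V → ℂ) x = (u : V → ℂ) x + (v : V → ℂ) x := by
        rw [lp.coeFn_add, Pi.add_apply]
      rw [this, hfu x, hgv x, lapOp_add hlf f g x]
      ring
  smul_mem' := by
    rintro a u ⟨f, hf, hfu⟩
    refine ⟨fun y => a * f y, ?_, fun x => ?_⟩
    · refine Set.Finite.subset hf fun y hy => ?_
      rw [Function.mem_support] at hy ⊢
      exact fun h0 => hy (by rw [h0, mul_zero])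
    · have : (↑(a • u) : V → ℂ) x = a * (u : V → ℂ) x := by
        rw [lp.coeFn_smul, Pi.smul_apply, smul_eq_mul]
      rw [this, hfu x, lapOp_smul hlf a f x]
      ring

/-- Dirac delta. -/
def dirac (z : V) : V → ℂ := fun x =>
  haveI := Classical.propDecidable (x = z)
  if x = z then 1 else 0

lemma dirac_self (z : V) : dirac z z = 1 := by simp [dirac]

lemma dirac_ne {z x : V} (h : x ≠ z) : dirac z x = 0 := by simp [dirac, h]

lemma dirac_finsupp (z : V) : FinSupp (dirac z) := by
  apply Set.Finite.subset (Set.finite_singleton z)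
  intro x hx
  rw [Function.mem_support] at hx
  by_contra hxz
  simp only [Set.mem_singleton_iff] at hxz
  exact hx (dirac_ne hxz)

section Dirac

variable {c : ℝ} {b : V → V → ℝ}

open Classical in
lemma lapOp_dirac (hc : 0 < c) (hloop : ∀ x, b x x = 0) (hlf : LocFinGraph b) (z x : V) :
    lapOp (fun _ => c) b (dirac z) x
      = (1 / (c : ℂ)) * ((if x = z then ((∑ y ∈ (hlf z).toFinset, b z y : ℝ) : ℂ) else 0)
          - (b x z : ℂ)) := by
  classical
  have hzs : z ∉ (hlf z).toFinset := by
    rw [Set.Finite.mem_toFinset]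
    simp [hloop z]
  rw [lapOp]
  rw [tsumb hlf x (fun y => dirac z x - dirac z y)]
  by_cases hxz : x = z
  · subst hxz
    rw [if_pos rfl]
    congr 1
    have hsum : ∑ y ∈ (hlf x).toFinset, (b x y : ℂ) * (dirac x x - dirac x y)
        = ∑ y ∈ (hlf x).toFinset, ((b x y : ℝ) : ℂ) := by
      refine Finset.sum_congr rfl fun y hy => ?_
      have hyz : y ≠ x := fun h => hzs (h ▸ hy)
      rw [dirac_self, dirac_ne hyz]
      ring
    rw [hsum, hloop x]
    push_cast
    ring
  · rw [if_neg hxz]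
    congr 1
    have hsum : ∑ y ∈ (hlf x).toFinset, (b x y : ℂ) * (dirac z x - dirac z y)
        = ∑ y ∈ (hlf x).toFinset, (if y = z then -((b x y : ℝ) : ℂ) else 0) := by
      refine Finset.sum_congr rfl fun y _ => ?_
      by_cases hyz : y = z
      · subst hyz
        rw [if_pos rfl, dirac_self, dirac_ne hxz]
        ring
      · rw [if_neg hyz, dirac_ne hxz, dirac_ne hyz]
        ring
    rw [hsum, Finset.sum_ite_eq' _ z (fun y => -((b x y : ℝ) : ℂ))]
    by_cases hzmem : z ∈ (hlf x).toFinset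
    · rw [if_pos hzmem]
      ring
    · rw [if_neg hzmem, bzero1 hlf hzmem]
      push_cast
      ring

end Dirac

lemma density (c : ℝ) (hc : 0 < c) (b : V → V → ℝ)
    (hb : ∀ x y, 0 ≤ b x y) (hloop : ∀ x, b x x = 0) (hlf : LocFinGraph b) (hK : Kirchhoff b)
    (l : ℂ) (hl : 0 < l.re) (v : V → ℂ) (hv : MemL2 (fun _ => c) v) (ε : ℝ) (hε : 0 < ε) :
    ∃ f : V → ℂ, FinSupp f ∧
      l2normSq (fun _ => c) (fun x => lapOp (fun _ => c) b f x + l * f x - v x) < ε := by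
  classical
  set R := rangeSubmodule c b hlf l with hR
  -- Step 1: the orthogonal complement of the range is trivial
  have hbot : Rᗮ = ⊥ := by
    rw [Submodule.eq_bot_iff]
    intro g hg
    have heqn : ∀ z, lapOp (fun _ => c) (fun x y => b y x) (g : V → ℂ) z
        + conj l * (g : V → ℂ) z = 0 := by
      intro z
      set s := (hlf z).toFinset with hsdef
      have hzs : z ∉ s := by
        rw [hsdef, Set.Finite.mem_toFinset]
        simp [hloop z]
      set Kr : ℝ := ∑ y ∈ s, b z y with hKrdef
      have hKr : Kr = ∑ y ∈ s, b y z := by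
        rw [hKrdef, ← tsumbr hlf z, ← tsumbtr hlf z]
        exact hK z
      set uzf : V → ℂ := fun x => lapOp (fun _ => c) b (dirac z) x + l * dirac z x with huzf
      have huzfin : FinSupp uzf := finsupp_image hlf l (dirac_finsupp z)
      set uz : lp (fun _ : V => ℂ) 2 := ⟨uzf, memℓp_of_finsupp huzfin⟩ with huz
      have huzR : uz ∈ R := ⟨dirac z, dirac_finsupp z, fun x => rfl⟩
      have hinner : (inner ℂ uz g : ℂ) = 0 := (Submodule.mem_orthogonal R g).mp hg uz huzR
      rw [lp.inner_eq_tsum] at hinner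
      -- values of the generator
      have hval_z : uzf z = ((c⁻¹ * Kr : ℝ) : ℂ) + l := by
        rw [huzf]
        simp only
        rw [lapOp_dirac hc hloop hlf z z, if_pos rfl, dirac_self, hloop z, ← hsdef, ← hKrdef]
        push_cast
        ring
      have hval_ne : ∀ x, x ≠ z → uzf x = ((-(c⁻¹ * b x z) : ℝ) : ℂ) := by
        intro x hxz
        rw [huzf]
        simp only
        rw [lapOp_dirac hc hloop hlf z x, if_neg hxz, dirac_ne hxz]
        push_cast
        ring
      -- convert the inner product to a finite sum
      have hsum0 : ∑ x ∈ insert z s, conj (uzf x) * (g : V → ℂ) x = 0 := by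
        rw [← hinner]
        refine Eq.symm ((tsum_eq_sum (f := fun i => inner ℂ ((uz : V → ℂ) i) ((g : V → ℂ) i))
          fun x hx => ?_).trans (Finset.sum_congr rfl fun x _ => RCLike.inner_apply' _ _))
        rw [Finset.mem_insert] at hx
        push_neg at hx
        have hbxz : b x z = 0 := bzero2 hlf (hsdef ▸ hx.2)
        have : uzf x = 0 := by
          rw [hval_ne x hx.1, hbxz]
          push_cast
          ring
        show (inner ℂ ((uz : V → ℂ) x) ((g : V → ℂ) x) : ℂ) = 0
        rw [show (uz : V → ℂ) x = uzf x from rfl, this, RCLike.inner_apply', map_zero, zero_mul]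
      rw [Finset.sum_insert hzs] at hsum0
      have hz' : conj (uzf z) = ((c⁻¹ * Kr : ℝ) : ℂ) + conj l := by
        rw [hval_z, map_add, Complex.conj_ofReal]
      have hne' : ∀ x ∈ s, conj (uzf x) * (g : V → ℂ) x
          = ((c⁻¹ : ℝ) : ℂ) * (-(((b x z : ℝ) : ℂ) * (g : V → ℂ) x)) := by
        intro x hxs
        have hxz : x ≠ z := fun h => hzs (h ▸ hxs)
        rw [hval_ne x hxz, Complex.conj_ofReal]
        push_cast
        ring
      rw [hz', Finset.sum_congr rfl hne', ← Finset.mul_sum, Finset.sum_neg_distrib] at hsum0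
      -- the target equation
      rw [lapOp]
      rw [show (∑' y, (((fun x y => b y x) z y : ℝ) : ℂ) * ((g : V → ℂ) z - (g : V → ℂ) y))
          = ∑ y ∈ (hlf z).toFinset, ((b y z : ℝ) : ℂ) * ((g : V → ℂ) z - (g : V → ℂ) y) from
        tsumbt hlf z (fun y => (g : V → ℂ) z - (g : V → ℂ) y)]
      rw [← hsdef]
      have hs1 : ∑ y ∈ s, ((b y z : ℝ) : ℂ) * ((g : V → ℂ) z - (g : V → ℂ) y)
          = ((Kr : ℝ) : ℂ) * (g : V → ℂ) z - ∑ y ∈ s, ((b y z : ℝ) : ℂ) * (g : V → ℂ) y := by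
        rw [Finset.sum_congr rfl fun y (_ : y ∈ s) => mul_sub ((b y z : ℝ) : ℂ)
          ((g : V → ℂ) z) ((g : V → ℂ) y), Finset.sum_sub_distrib, ← Finset.sum_mul]
        congr 2
        rw [hKr]
        push_cast
        ring
      rw [hs1]
      push_cast at hsum0 ⊢
      linear_combination hsum0
    have hg0 : (g : V → ℂ) = 0 :=
      maxPrinciple c hc b hb hlf (conj l) (by simpa using hl) (g : V → ℂ)
        (memL2_of_lp g) heqn
    refine lp.ext ?_
    rw [lp.coeFn_zero]
    exact hg0
  -- Step 2: density
  have htop : R.topologicalClosure = ⊤ := Submodule.topologicalClosure_eq_top_iff.mpr hbot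
  set vE : lp (fun _ : V => ℂ) 2 := ⟨v, memℓp_of_memL2 hc hv⟩ with hvE
  have hcl : vE ∈ closure (R : Set (lp (fun _ : V => ℂ) 2)) := by
    rw [← Submodule.topologicalClosure_coe, htop]
    simp
  obtain ⟨u, huR, hdist⟩ := Metric.mem_closure_iff.mp hcl (Real.sqrt (ε / c))
    (Real.sqrt_pos.mpr (div_pos hε hc))
  rw [SetLike.mem_coe] at huR
  obtain ⟨f, hfin, hfu⟩ := huR
  refine ⟨f, hfin, ?_⟩
  have hfun2 : (fun x => lapOp (fun _ => c) b f x + l * f x - v x)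
      = fun x => (↑(u - vE) : V → ℂ) x := by
    funext x
    rw [lp.coeFn_sub, Pi.sub_apply, ← hfu x]
  rw [hfun2]
  show (∑' x, c * ‖(↑(u - vE) : V → ℂ) x‖ ^ 2) < ε
  have hns : ∑' x, c * ‖(↑(u - vE) : V → ℂ) x‖ ^ 2 = c * ‖u - vE‖ ^ 2 := by
    rw [tsum_mul_left, lp_norm_sq]
  rw [hns]
  have hlt : ‖u - vE‖ < Real.sqrt (ε / c) := by
    rw [← dist_eq_norm, dist_comm]
    exact hdist
  have h2 : ‖u - vE‖ ^ 2 < ε / c := by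
    have h3 := pow_lt_pow_left₀ hlt (norm_nonneg _) (two_ne_zero)
    rwa [Real.sq_sqrt (div_pos hε hc).le] at h3
  calc c * ‖u - vE‖ ^ 2 < c * (ε / c) := (mul_lt_mul_iff_right₀ hc).mpr h2
    _ = ε := by field_simp

/-- on an infinite, locally finite, weakly connected weighted graph with
constant vertex weight `m ≡ c` satisfying the Kirchhoff assumption, any `g ∈ ℓ²(V,m)`
solving `Δ'g + g = 0` pointwise vanishes; consequently the closure of `Δ` is m-accretive. -/
theorem stmt5 [Infinite V] (c : ℝ) (hc : 0 < c) (b : V → V → ℝ)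
    (hb : ∀ x y, 0 ≤ b x y) (hloop : ∀ x, b x x = 0) (hlf : LocFinGraph b)
    (hconn : WeaklyConnected b) (hK : Kirchhoff b) :
    (∀ g : V → ℂ, MemL2 (fun _ => c) g →
      (∀ x, lapOp (fun _ => c) (fun x y => b y x) g x + g x = 0) → g = 0) ∧
    IsMAccretiveClosure (fun _ => c) (lapOp (fun _ => c) b) := by
  constructor
  · intro g hg2 heq
    exact maxPrinciple c hc b hb hlf 1 (by norm_num) g hg2 (fun x => by simpa using heq x)
  · intro l hl
    refine ⟨fun f hf => apriori c hc b hb hlf hK l hl f hf, fun v hv ε hε => ?_⟩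
    exact density c hc b hb hloop hlf hK l hl v hv ε hε
end
end

section
/- If the asymmetry condition holds (there exists C > 0 with (1/m(x)) Σ_{y∈V_x} |b(x,y) − b(y,x)|²/b'(x,y) ≤ C for all x), then the skew-symmetric part B is relatively bounded with respect to the symmetric part H: for every f ∈ C_c(V), ‖Bf‖² ≤ (C/2)⟨Hf, f⟩ ≤ (C²/4)‖f‖² + (1/4)‖Hf‖². -/
open scoped ComplexConjugate
noncomputable section

variable {V : Type*}

set_option maxHeartbeats 1000000

/-- under the asymmetry condition, the skew part `B` is relatively bounded
w.r.t. the symmetric part `H`: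
`‖Bf‖² ≤ (C/2)⟨Hf,f⟩ ≤ (C²/4)‖f‖² + (1/4)‖Hf‖²` for all `f ∈ C_c(V)`,
where `⟨Hf,f⟩ = (1/2) Σ_{x,y} b'(x,y)|f(x)-f(y)|²`. -/
theorem stmt10 (m : V → ℝ) (b : V → V → ℝ) (hm : ∀ x, 0 < m x)
    (hb : ∀ x y, 0 ≤ b x y) (hloop : ∀ x, b x x = 0) (hlf : LocFinGraph b)
    (hK : Kirchhoff b) (C : ℝ) (hC : 0 < C) (hasym : AsymCond m b C) :
    ∀ f : V → ℂ, FinSupp f →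
      l2normSq m (skewOp m b f) ≤
        C / 2 * ((1 / 2) * ∑' p : V × V, bsym b p.1 p.2 * ‖f p.1 - f p.2‖ ^ 2) ∧
      C / 2 * ((1 / 2) * ∑' p : V × V, bsym b p.1 p.2 * ‖f p.1 - f p.2‖ ^ 2) ≤
        C ^ 2 / 4 * l2normSq m f + 1 / 4 * l2normSq m (lapOp m (bsym b) f) := by
  intro f hf
  classical
  set S : Finset V := hf.toFinset ∪ hf.toFinset.biUnion (fun z => (hlf z).toFinset) with hS
  have hS_supp : ∀ x : V, f x ≠ 0 → x ∈ S := fun x h =>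
    Finset.mem_union_left _ (hf.mem_toFinset.2 h)
  have hS_nbr : ∀ x y : V, f x ≠ 0 → (b x y ≠ 0 ∨ b y x ≠ 0) → y ∈ S := fun x y hx h =>
    Finset.mem_union_right _ (Finset.mem_biUnion.2 ⟨x, hf.mem_toFinset.2 hx, (hlf x).mem_toFinset.2 h⟩)
  have hfz : ∀ x : V, x ∉ S → f x = 0 := by
    intro x hx; by_contra h; exact hx (hS_supp x h)
  have hbsnn : ∀ x y : V, 0 ≤ bsym b x y := fun x y =>
    div_nonneg (add_nonneg (hb x y) (hb y x)) (by norm_num)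
  have hbs_ne : ∀ x y : V, bsym b x y ≠ 0 → (b x y ≠ 0 ∨ b y x ≠ 0) := by
    intro x y h
    by_contra hc
    push_neg at hc
    exact h (by simp [bsym, hc.1, hc.2])
  have hbs_zero : ∀ x y : V, bsym b x y = 0 → b x y = 0 ∧ b y x = 0 := by
    intro x y h
    have h1 := hb x y; have h2 := hb y x
    have : b x y + b y x = 0 := by
      have := h
      unfold bsym at this
      linarith
    constructor <;> linarith
  have hbs_symm : ∀ x y : V, bsym b x y = bsym b y x := by
    intro x y; unfold bsym; ring
  have hNzero : ∀ x y : V, y ∉ (hlf x).toFinset → b x y = 0 ∧ b y x = 0 := by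
    intro x y hy
    rw [(hlf x).mem_toFinset, Set.mem_setOf_eq, not_or, not_not, not_not] at hy
    exact hy
  -- the tsum over pairs reduces to a finite sum over S ×ˢ S
  have hQ : (∑' p : V × V, bsym b p.1 p.2 * ‖f p.1 - f p.2‖ ^ 2)
      = ∑ p ∈ S ×ˢ S, bsym b p.1 p.2 * ‖f p.1 - f p.2‖ ^ 2 := by
    apply tsum_eq_sum
    intro p hp
    by_cases hbz : bsym b p.1 p.2 = 0
    · rw [hbz, zero_mul]
    · by_cases hfe : f p.1 = f p.2
      · rw [hfe]; simp
      · exfalso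
        apply hp
        rw [Finset.mem_product]
        have hn := hbs_ne _ _ hbz
        by_cases h1 : f p.1 = 0
        · have h2 : f p.2 ≠ 0 := fun h => hfe (h1.trans h.symm)
          exact ⟨hS_nbr p.2 p.1 h2 hn.symm, hS_supp _ h2⟩
        · exact ⟨hS_supp _ h1, hS_nbr p.1 p.2 h1 hn⟩
  have hQprod : ∑ p ∈ S ×ˢ S, bsym b p.1 p.2 * ‖f p.1 - f p.2‖ ^ 2
      = ∑ x ∈ S, ∑ y ∈ S, bsym b x y * ‖f x - f y‖ ^ 2 := by rw [Finset.sum_product]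
  set Q : ℝ := ∑ x ∈ S, ∑ y ∈ S, bsym b x y * ‖f x - f y‖ ^ 2 with hQdef
  have hQnn : 0 ≤ Q :=
    Finset.sum_nonneg fun x _ => Finset.sum_nonneg fun y _ =>
      mul_nonneg (hbsnn x y) (by positivity)
  -- Part 1 : per-vertex Cauchy-Schwarz
  have hskew_supp : ∀ x : V, x ∉ S → skewOp m b f x = 0 := by
    intro x hx
    have hterm : ∀ y : V, (((b x y - b y x) / 2 : ℝ) : ℂ) * (f x - f y) = 0 := by
      intro y
      by_cases hby : b x y ≠ 0 ∨ b y x ≠ 0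
      · have hfy : f y = 0 := by
          by_contra h
          exact hx (hS_nbr y x h hby.symm)
        rw [hfz x hx, hfy]; simp
      · push_neg at hby
        rw [hby.1, hby.2]; simp
    unfold skewOp
    rw [tsum_congr hterm]
    simp
  have key1 : ∀ x : V, m x * ‖skewOp m b f x‖ ^ 2
      ≤ C / 4 * ∑ y ∈ (hlf x).toFinset, bsym b x y * ‖f x - f y‖ ^ 2 := by
    intro x
    set N : Finset V := (hlf x).toFinset with hNdef
    have hts : (∑' y, (((b x y - b y x) / 2 : ℝ) : ℂ) * (f x - f y))
        = ∑ y ∈ N, (((b x y - b y x) / 2 : ℝ) : ℂ) * (f x - f y) := by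
      apply tsum_eq_sum
      intro y hy
      obtain ⟨h1, h2⟩ := hNzero x y hy
      rw [h1, h2]; simp
    set T : ℂ := ∑ y ∈ N, (((b x y - b y x) / 2 : ℝ) : ℂ) * (f x - f y) with hTdef
    have hmx := hm x
    have hnorm : ‖skewOp m b f x‖ = 1 / m x * ‖T‖ := by
      unfold skewOp
      rw [hts, norm_mul]
      congr 1
      rw [norm_div, norm_one, Complex.norm_real, Real.norm_eq_abs, abs_of_pos hmx]
    set u : V → ℝ := fun y => |b x y - b y x| / (2 * Real.sqrt (bsym b x y)) with hu
    set v : V → ℝ := fun y => Real.sqrt (bsym b x y) * ‖f x - f y‖ with hv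
    have huv : ∀ y : V, ‖(((b x y - b y x) / 2 : ℝ) : ℂ) * (f x - f y)‖ = u y * v y := by
      intro y
      rw [norm_mul, Complex.norm_real, Real.norm_eq_abs]
      rcases eq_or_lt_of_le (hbsnn x y) with h0 | hpos
      · obtain ⟨h1, h2⟩ := hbs_zero x y h0.symm
        simp [hu, hv, h1, h2, ← h0]
      · have hs : (0:ℝ) < Real.sqrt (bsym b x y) := Real.sqrt_pos.2 hpos
        simp only [hu, hv]
        rw [abs_div, abs_two]
        field_simp
    have hu2 : ∀ y : V, u y ^ 2 = |b x y - b y x| ^ 2 / (4 * bsym b x y) := by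
      intro y
      simp only [hu, div_pow, mul_pow, Real.sq_sqrt (hbsnn x y)]
      norm_num
    have hv2 : ∀ y : V, v y ^ 2 = bsym b x y * ‖f x - f y‖ ^ 2 := by
      intro y
      simp only [hv, mul_pow, Real.sq_sqrt (hbsnn x y)]
    have hTle : ‖T‖ ≤ ∑ y ∈ N, u y * v y := by
      calc ‖T‖ ≤ ∑ y ∈ N, ‖(((b x y - b y x) / 2 : ℝ) : ℂ) * (f x - f y)‖ :=
            norm_sum_le _ _
        _ = ∑ y ∈ N, u y * v y := Finset.sum_congr rfl fun y _ => huv y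
    have hCS := Finset.sum_mul_sq_le_sq_mul_sq N u v
    have hA : ∑ y ∈ N, |b x y - b y x| ^ 2 / bsym b x y ≤ C * m x := by
      have h1 := hasym x
      have hts2 : (∑' y, |b x y - b y x| ^ 2 / bsym b x y)
          = ∑ y ∈ N, |b x y - b y x| ^ 2 / bsym b x y := by
        apply tsum_eq_sum
        intro y hy
        obtain ⟨ha, hb'⟩ := hNzero x y hy
        rw [ha, hb']
        simp
      rw [hts2] at h1
      have h2 := mul_le_mul_of_nonneg_left h1 hmx.le
      rw [show m x * (1 / m x * ∑ y ∈ N, |b x y - b y x| ^ 2 / bsym b x y)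
          = (m x * (1 / m x)) * ∑ y ∈ N, |b x y - b y x| ^ 2 / bsym b x y from by ring,
        mul_one_div_cancel hmx.ne', one_mul] at h2
      linarith
    have hsu : ∑ y ∈ N, u y ^ 2 ≤ C * m x / 4 := by
      have heq : ∑ y ∈ N, u y ^ 2 = (∑ y ∈ N, |b x y - b y x| ^ 2 / bsym b x y) / 4 := by
        rw [Finset.sum_div]
        apply Finset.sum_congr rfl
        intro y _
        rw [hu2 y, div_div, mul_comm (4:ℝ)]
      rw [heq]
      linarith
    have hsv : (0:ℝ) ≤ ∑ y ∈ N, v y ^ 2 := Finset.sum_nonneg fun y _ => sq_nonneg _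
    have huvnn : (0:ℝ) ≤ ∑ y ∈ N, u y * v y :=
      Finset.sum_nonneg fun y _ =>
        mul_nonneg (div_nonneg (abs_nonneg _) (by positivity))
          (mul_nonneg (Real.sqrt_nonneg _) (norm_nonneg _))
    have hT2 : ‖T‖ ^ 2 ≤ C * m x / 4 * ∑ y ∈ N, v y ^ 2 := by
      calc ‖T‖ ^ 2 ≤ (∑ y ∈ N, u y * v y) ^ 2 := by
            exact pow_le_pow_left₀ (norm_nonneg _) hTle 2
        _ ≤ (∑ y ∈ N, u y ^ 2) * ∑ y ∈ N, v y ^ 2 := hCS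
        _ ≤ C * m x / 4 * ∑ y ∈ N, v y ^ 2 := mul_le_mul_of_nonneg_right hsu hsv
    have hveq : ∑ y ∈ N, bsym b x y * ‖f x - f y‖ ^ 2 = ∑ y ∈ N, v y ^ 2 :=
      Finset.sum_congr rfl fun y _ => (hv2 y).symm
    rw [hnorm, hveq, mul_pow]
    have hrw : m x * ((1 / m x) ^ 2 * ‖T‖ ^ 2) = ‖T‖ ^ 2 / m x := by
      field_simp
    rw [hrw, div_le_iff₀ hmx]
    calc ‖T‖ ^ 2 ≤ C * m x / 4 * ∑ y ∈ N, v y ^ 2 := hT2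
      _ = C / 4 * (∑ y ∈ N, v y ^ 2) * m x := by ring
  -- extending sums over neighbors to sums over S
  have hl2skew : l2normSq m (skewOp m b f) = ∑ x ∈ S, m x * ‖skewOp m b f x‖ ^ 2 := by
    unfold l2normSq
    apply tsum_eq_sum
    intro x hx
    rw [hskew_supp x hx]
    simp
  have hdouble : ∀ x ∈ S, ∑ y ∈ (hlf x).toFinset, bsym b x y * ‖f x - f y‖ ^ 2
      = ∑ y ∈ S, bsym b x y * ‖f x - f y‖ ^ 2 := by
    intro x _
    have h1 : ∑ y ∈ (hlf x).toFinset, bsym b x y * ‖f x - f y‖ ^ 2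
        = ∑ y ∈ (hlf x).toFinset ∪ S, bsym b x y * ‖f x - f y‖ ^ 2 := by
      apply Finset.sum_subset Finset.subset_union_left
      intro y _ hyn
      obtain ⟨ha, hb'⟩ := hNzero x y hyn
      simp [bsym, ha, hb']
    have h2 : ∑ y ∈ S, bsym b x y * ‖f x - f y‖ ^ 2
        = ∑ y ∈ (hlf x).toFinset ∪ S, bsym b x y * ‖f x - f y‖ ^ 2 := by
      apply Finset.sum_subset Finset.subset_union_right
      intro y _ hyS
      by_cases hbz : bsym b x y = 0
      · rw [hbz, zero_mul]
      · have hfy : f y = 0 := hfz y hyS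
        have hfx : f x = 0 := by
          by_contra h
          exact hyS (hS_nbr x y h (hbs_ne x y hbz))
        rw [hfx, hfy]
        simp
    rw [h1]
    exact h2.symm
  have part1 : l2normSq m (skewOp m b f)
      ≤ C / 2 * ((1 / 2) * ∑' p : V × V, bsym b p.1 p.2 * ‖f p.1 - f p.2‖ ^ 2) := by
    rw [hQ, hQprod, hl2skew]
    calc ∑ x ∈ S, m x * ‖skewOp m b f x‖ ^ 2
        ≤ ∑ x ∈ S, C / 4 * ∑ y ∈ (hlf x).toFinset, bsym b x y * ‖f x - f y‖ ^ 2 :=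
          Finset.sum_le_sum fun x _ => key1 x
      _ = ∑ x ∈ S, C / 4 * ∑ y ∈ S, bsym b x y * ‖f x - f y‖ ^ 2 :=
          Finset.sum_congr rfl fun x hx => by rw [hdouble x hx]
      _ = C / 4 * Q := by rw [← Finset.mul_sum]
      _ = C / 2 * ((1 / 2) * Q) := by ring
  -- Part 2
  have hlap_supp : ∀ x : V, x ∉ S → lapOp m (bsym b) f x = 0 := by
    intro x hx
    have hterm : ∀ y : V, ((bsym b x y : ℝ) : ℂ) * (f x - f y) = 0 := by
      intro y
      by_cases hbz : bsym b x y = 0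
      · rw [hbz]; simp
      · have hfy : f y = 0 := by
          by_contra h
          exact hx (hS_nbr y x h (hbs_ne x y hbz).symm)
        rw [hfz x hx, hfy]; simp
    unfold lapOp
    rw [tsum_congr hterm]
    simp
  have hNf : l2normSq m f = ∑ x ∈ S, m x * ‖f x‖ ^ 2 := by
    unfold l2normSq
    apply tsum_eq_sum
    intro x hx
    rw [hfz x hx]
    simp
  have hNH : l2normSq m (lapOp m (bsym b) f)
      = ∑ x ∈ S, m x * ‖lapOp m (bsym b) f x‖ ^ 2 := by
    unfold l2normSq
    apply tsum_eq_sum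
    intro x hx
    rw [hlap_supp x hx]
    simp
  set NF : ℝ := ∑ x ∈ S, m x * ‖f x‖ ^ 2 with hNFdef
  set NH : ℝ := ∑ x ∈ S, m x * ‖lapOp m (bsym b) f x‖ ^ 2 with hNHdef
  have hNFnn : 0 ≤ NF := Finset.sum_nonneg fun x _ => mul_nonneg (hm x).le (by positivity)
  have hNHnn : 0 ≤ NH := Finset.sum_nonneg fun x _ => mul_nonneg (hm x).le (by positivity)
  set A : ℂ := ∑ x ∈ S, ∑ y ∈ S, ((bsym b x y : ℝ) : ℂ) * (f x - f y) * conj (f x) with hAdef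
  -- A equals the inner product of Hf with f
  have hA_eq : A = ∑ x ∈ S, (m x : ℂ) * lapOp m (bsym b) f x * conj (f x) := by
    apply Finset.sum_congr rfl
    intro x _
    have hts : (∑' y, ((bsym b x y : ℝ) : ℂ) * (f x - f y))
        = ∑ y ∈ (hlf x).toFinset, ((bsym b x y : ℝ) : ℂ) * (f x - f y) := by
      apply tsum_eq_sum
      intro y hy
      obtain ⟨ha, hb'⟩ := hNzero x y hy
      simp [bsym, ha, hb']
    have hmx : (m x : ℂ) ≠ 0 := Complex.ofReal_ne_zero.2 (hm x).ne'
    unfold lapOp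
    rw [hts]
    rw [show (m x : ℂ) * (1 / (m x : ℂ) * ∑ y ∈ (hlf x).toFinset,
        ((bsym b x y : ℝ) : ℂ) * (f x - f y)) * conj (f x)
      = (∑ y ∈ (hlf x).toFinset, ((bsym b x y : ℝ) : ℂ) * (f x - f y)) * conj (f x) from by
        field_simp]
    rw [Finset.sum_mul]
    have h1 : ∑ y ∈ (hlf x).toFinset, ((bsym b x y : ℝ) : ℂ) * (f x - f y) * conj (f x)
        = ∑ y ∈ (hlf x).toFinset ∪ S, ((bsym b x y : ℝ) : ℂ) * (f x - f y) * conj (f x) := by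
      apply Finset.sum_subset Finset.subset_union_left
      intro y _ hyn
      obtain ⟨ha, hb'⟩ := hNzero x y hyn
      simp [bsym, ha, hb']
    have h2 : ∑ y ∈ S, ((bsym b x y : ℝ) : ℂ) * (f x - f y) * conj (f x)
        = ∑ y ∈ (hlf x).toFinset ∪ S, ((bsym b x y : ℝ) : ℂ) * (f x - f y) * conj (f x) := by
      apply Finset.sum_subset Finset.subset_union_right
      intro y _ hyS
      by_cases hbz : bsym b x y = 0
      · rw [hbz]; simp
      · have hfy : f y = 0 := hfz y hyS
        have hfx : f x = 0 := by
          by_contra h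
          exact hyS (hS_nbr x y h (hbs_ne x y hbz))
        rw [hfx, hfy]
        simp
    rw [h2]
    exact h1.symm
  -- Green's identity : 2 * Re A = Q
  have hAA : A + A = ((Q : ℝ) : ℂ) := by
    have hswap : A = ∑ x ∈ S, ∑ y ∈ S,
        ((bsym b x y : ℝ) : ℂ) * (f x - f y) * (-(conj (f y))) := by
      rw [hAdef, Finset.sum_comm]
      apply Finset.sum_congr rfl
      intro x _
      apply Finset.sum_congr rfl
      intro y _
      rw [hbs_symm y x]
      ring
    calc A + A = ∑ x ∈ S, ∑ y ∈ S,
          (((bsym b x y : ℝ) : ℂ) * (f x - f y) * conj (f x)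
           + ((bsym b x y : ℝ) : ℂ) * (f x - f y) * (-(conj (f y)))) := by
          nth_rewrite 2 [hswap]
          nth_rewrite 1 [hAdef]
          rw [← Finset.sum_add_distrib]
          apply Finset.sum_congr rfl
          intro x _
          rw [← Finset.sum_add_distrib]
      _ = ∑ x ∈ S, ∑ y ∈ S, ((bsym b x y * ‖f x - f y‖ ^ 2 : ℝ) : ℂ) := by
          apply Finset.sum_congr rfl
          intro x _
          apply Finset.sum_congr rfl
          intro y _
          have : ((bsym b x y : ℝ) : ℂ) * (f x - f y) * conj (f x)
              + ((bsym b x y : ℝ) : ℂ) * (f x - f y) * (-(conj (f y)))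
              = ((bsym b x y : ℝ) : ℂ) * ((f x - f y) * conj (f x - f y)) := by
            rw [map_sub]
            ring
          rw [this, Complex.mul_conj]
          rw [Complex.normSq_eq_norm_sq]
          push_cast
          ring
      _ = ((Q : ℝ) : ℂ) := by
          rw [hQdef]
          push_cast
          rfl
  have hQre : Q = 2 * A.re := by
    have := congrArg Complex.re hAA
    simp only [Complex.add_re, Complex.ofReal_re] at this
    linarith
  set P : ℝ := ∑ x ∈ S, m x * (‖lapOp m (bsym b) f x‖ * ‖f x‖) with hPdef
  have hPnn : 0 ≤ P := Finset.sum_nonneg fun x _ =>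
    mul_nonneg (hm x).le (mul_nonneg (norm_nonneg _) (norm_nonneg _))
  have hAle : ‖A‖ ≤ P := by
    rw [hA_eq]
    calc ‖∑ x ∈ S, (m x : ℂ) * lapOp m (bsym b) f x * conj (f x)‖
        ≤ ∑ x ∈ S, ‖(m x : ℂ) * lapOp m (bsym b) f x * conj (f x)‖ := norm_sum_le _ _
      _ = P := by
          apply Finset.sum_congr rfl
          intro x _
          rw [norm_mul, norm_mul, Complex.norm_real, Real.norm_eq_abs, abs_of_pos (hm x),
            RCLike.norm_conj, mul_assoc]
  have hP2 : P ^ 2 ≤ NH * NF := by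
    have hCS2 := Finset.sum_mul_sq_le_sq_mul_sq S
      (fun x => Real.sqrt (m x) * ‖lapOp m (bsym b) f x‖)
      (fun x => Real.sqrt (m x) * ‖f x‖)
    have e1 : ∑ x ∈ S, (Real.sqrt (m x) * ‖lapOp m (bsym b) f x‖)
        * (Real.sqrt (m x) * ‖f x‖) = P := by
      apply Finset.sum_congr rfl
      intro x _
      rw [show (Real.sqrt (m x) * ‖lapOp m (bsym b) f x‖) * (Real.sqrt (m x) * ‖f x‖)
          = (Real.sqrt (m x) * Real.sqrt (m x)) * (‖lapOp m (bsym b) f x‖ * ‖f x‖) from by ring,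
        Real.mul_self_sqrt (hm x).le]
    have e2 : ∑ x ∈ S, (Real.sqrt (m x) * ‖lapOp m (bsym b) f x‖) ^ 2 = NH := by
      apply Finset.sum_congr rfl
      intro x _
      rw [mul_pow, Real.sq_sqrt (hm x).le]
    have e3 : ∑ x ∈ S, (Real.sqrt (m x) * ‖f x‖) ^ 2 = NF := by
      apply Finset.sum_congr rfl
      intro x _
      rw [mul_pow, Real.sq_sqrt (hm x).le]
    rw [e1, e2, e3] at hCS2
    exact hCS2
  have hQP : Q ≤ 2 * P := by
    have hre : A.re ≤ ‖A‖ := by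
      exact Complex.re_le_norm A
    linarith [hAle]
  refine ⟨part1, ?_⟩
  rw [hQ, hQprod, hNf, hNH]
  -- goal : C/2 * (1/2 * Q) ≤ C^2/4 * NF + 1/4 * NH
  have key : 2 * C * P ≤ C ^ 2 * NF + NH := by
    have h1 : (2 * C * P) ^ 2 ≤ (C ^ 2 * NF + NH) ^ 2 := by
      nlinarith [sq_nonneg (C ^ 2 * NF - NH), mul_nonneg (mul_nonneg hC.le hC.le)
        (sub_nonneg.2 hP2)]
    have h2 : 0 ≤ 2 * C * P := by positivity
    have h3 : 0 ≤ C ^ 2 * NF + NH := by positivity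
    nlinarith [h1, h2, h3]
  nlinarith [hQP, key, hC, hPnn]
end
end
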